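/- Four-round graded king consensus. Assume n > 3t and each node v has inputs x_v ∈ 𝒱 and ℓ_v ∈ Option (Fin n). The protocol prescribes: (round 1) a correct node w with ℓ_w = some u sends x_w to node u and nothing to other nodes; a correct node with ℓ_w = none sends nothing. (round 2) a correct node w sets h_w := 1 and sends x_w to all nodes if ℓ_w = some w and w received the value x_w from at least n − t nodes in round 1; otherwise it sets h_w := 0 and sends nothing. (round 3) a correct node v with ℓ_v = some ℓ' that received in round 2 from ℓ' a value c with c ≠ x_v sends c to all nodes; otherwise it sends nothing. (round 4) a correct node w sends x_w to exactly those nodes from which it received the value x_w in round 3. Output: each correct node v outputs (y_v, g_v), where g_v := h_v, and y_v := x' for some value x' that v received from at least t + 1 nodes in round 4 if such a value exists, and y_v := x_v otherwise. Then in every execution: (Validity) if there is x ∈ 𝒱 with x_v = x for all v ∈ H, then y_v = x for all v ∈ H; (King Validity) if there are x ∈ 𝒱 and ℓ ∈ H with (x_v, ℓ_v) = (x, some ℓ) for all v ∈ H, then g_ℓ = 1; (Graded King Agreement) if there is ℓ ∈ H with ℓ_v = some ℓ for all v ∈ H and g_ℓ = 1, then y_v = y_ℓ for all v ∈ H. 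-/

import Mathlib

/-!
Validity: a value with `t + 1` round-4 votes has a correct voter, and a correct node only votes
for its own input. King validity: a correct king followed by all correct nodes receives the common
input from at least `n - t` nodes in round 1. Graded king agreement: a king `ℓ₀` of grade `1`
received its input `c` from `n - t ≥ 2t + 1` nodes, hence from more than `t` correct holders of `c`.
It broadcasts `c`, and a correct node `v` forwards `c` exactly when `x v ≠ c`, so every correct vote
at `v` is `c`. If `x v ≠ c`, the correct holders of `c` give `v` more than `t` votes for `c`, so `v`
cannot fall back on its own input; either way `v` outputs `c`.
-/

/-- Number of distinct senders from which a node received the message `c`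
(`recv u` is the message received from node `u`). -/
def recvCount {n : ℕ} {M : Type*} [DecidableEq M]
    (recv : Fin n → Option M) (c : M) : ℕ :=
  (Finset.univ.filter fun u => recv u = some c).card

namespace GradedKing

open Finset

section Counting

variable {n t : ℕ} {M : Type*} [DecidableEq M] {H : Finset (Fin n)}

theorem recvCount_le_card_filter_add (recv : Fin n → Option M) (c : M) :
    recvCount recv c ≤ #(H.filter fun w => recv w = some c) + #(univ \ H) := by
  refine (card_le_card fun w hw => ?_).trans (card_union_le _ _)
  by_cases hwH : w ∈ H <;> simp_all

theorem exists_mem_of_lt_recvCount (hH : #(univ \ H) ≤ t) {recv : Fin n → Option M} {c : M}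
    (hc : t < recvCount recv c) : ∃ w ∈ H, recv w = some c := by
  have hpos : 0 < #(H.filter fun w => recv w = some c) := by
    have := recvCount_le_card_filter_add (H := H) recv c
    omega
  obtain ⟨w, hw⟩ := card_pos.mp hpos
  exact ⟨w, (mem_filter.mp hw).1, (mem_filter.mp hw).2⟩

theorem card_le_recvCount {S : Finset (Fin n)} {recv : Fin n → Option M} {c : M}
    (hS : ∀ w ∈ S, recv w = some c) : #S ≤ recvCount recv c :=
  card_le_card fun w hw => mem_filter.mpr ⟨mem_univ w, hS w hw⟩

theorem sub_le_card_of_card_univ_sdiff_le (hH : #(univ \ H) ≤ t) : n - t ≤ #H := by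
  rw [card_univ_sdiff, Fintype.card_fin] at hH
  omega

end Counting

def IsThresholdOutput {n : ℕ} {𝒱 : Type*} [DecidableEq 𝒱] (t : ℕ) (recv : Fin n → Option 𝒱)
    (x₀ y₀ : 𝒱) : Prop :=
  ((∃ c : 𝒱, t + 1 ≤ recvCount recv c) → t + 1 ≤ recvCount recv y₀) ∧
    (¬ (∃ c : 𝒱, t + 1 ≤ recvCount recv c) → y₀ = x₀)

theorem IsThresholdOutput.eq_of_forall_correct {n t : ℕ} {𝒱 : Type*} [DecidableEq 𝒱]
    {H : Finset (Fin n)} (hH : #(univ \ H) ≤ t) {recv : Fin n → Option 𝒱} {x₀ y₀ d : 𝒱}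
    (hy : IsThresholdOutput t recv x₀ y₀) (hcorrect : ∀ w ∈ H, ∀ e, recv w = some e → e = d)
    (hd : x₀ = d ∨ t < recvCount recv d) : y₀ = d := by
  by_cases hex : ∃ c : 𝒱, t + 1 ≤ recvCount recv c
  · obtain ⟨w, hw, hrecv⟩ := exists_mem_of_lt_recvCount hH (hy.1 hex)
    exact hcorrect w hw y₀ hrecv
  · rw [hy.2 hex]
    exact hd.resolve_right fun hlt => hex ⟨d, hlt⟩

section Protocol

variable {n t : ℕ} {𝒱 : Type*} {H : Finset (Fin n)} {x : Fin n → 𝒱}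
  {ℓ : Fin n → Option (Fin n)} {recv1 recv2 recv3 recv4 : Fin n → Fin n → Option 𝒱}
  {h : Fin n → Fin 2}

theorem input_eq_of_recv1_eq_some
    (h1 : ∀ v : Fin n, ∀ w ∈ H, recv1 v w = if ℓ w = some v then some (x w) else none)
    {v w : Fin n} (hw : w ∈ H) {d : 𝒱} (hd : recv1 v w = some d) : x w = d := by
  rw [h1 v w hw] at hd
  split_ifs at hd
  exact Option.some_injective _ hd

variable [DecidableEq 𝒱]

theorem input_eq_of_recv4_eq_some
    (h4 : ∀ v : Fin n, ∀ w ∈ H, recv4 v w = if recv3 w v = some (x w) then some (x w) else none)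
    {v w : Fin n} (hw : w ∈ H) {d : 𝒱} (hd : recv4 v w = some d) :
    x w = d ∧ recv3 w v = some d := by
  rw [h4 v w hw] at hd
  split_ifs at hd with h3w
  obtain rfl := Option.some_injective _ hd
  exact ⟨rfl, h3w⟩

theorem validity
    (hH : #(univ \ H) ≤ t)
    (h4 : ∀ v : Fin n, ∀ w ∈ H, recv4 v w = if recv3 w v = some (x w) then some (x w) else none)
    {y : Fin n → 𝒱} {v : Fin n} (hv : v ∈ H) (hout : IsThresholdOutput t (recv4 v) (x v) (y v))
    {c : 𝒱} (hall : ∀ w ∈ H, x w = c) : y v = c := by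
  refine hout.eq_of_forall_correct hH (fun w hw e he => ?_) (.inl (hall v hv))
  exact (input_eq_of_recv4_eq_some h4 hw he).1 ▸ hall w hw

theorem king_validity
    (hH : #(univ \ H) ≤ t)
    (h1 : ∀ v : Fin n, ∀ w ∈ H, recv1 v w = if ℓ w = some v then some (x w) else none)
    (hh : ∀ w ∈ H, (h w = 1 ↔ (ℓ w = some w ∧ n - t ≤ recvCount (recv1 w) (x w))))
    {c : 𝒱} {ℓ₀ : Fin n} (hℓ₀ : ℓ₀ ∈ H) (hall : ∀ v ∈ H, x v = c ∧ ℓ v = some ℓ₀) :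
    h ℓ₀ = 1 := by
  refine (hh ℓ₀ hℓ₀).2 ⟨(hall ℓ₀ hℓ₀).2, (sub_le_card_of_card_univ_sdiff_le hH).trans ?_⟩
  refine card_le_recvCount fun w hw => ?_
  rw [h1 ℓ₀ w hw, if_pos (hall w hw).2, (hall w hw).1, (hall ℓ₀ hℓ₀).1]

/-- Of the `n - t ≥ 2t + 1` copies of its input that a king of grade `1` received in round 1, at
most `t` come from faulty nodes, and a correct node only sends its own input. -/
theorem lt_card_filter_input_eq_of_grade_one (hnt : 3 * t < n) (hH : #(univ \ H) ≤ t)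
    (h1 : ∀ v : Fin n, ∀ w ∈ H, recv1 v w = if ℓ w = some v then some (x w) else none)
    (hh : ∀ w ∈ H, (h w = 1 ↔ (ℓ w = some w ∧ n - t ≤ recvCount (recv1 w) (x w))))
    {ℓ₀ : Fin n} (hℓ₀ : ℓ₀ ∈ H) (hking : h ℓ₀ = 1) :
    t < #(H.filter fun w => x w = x ℓ₀) := by
  have hcount := ((hh ℓ₀ hℓ₀).1 hking).2
  have hsenders := recvCount_le_card_filter_add (H := H) (recv1 ℓ₀) (x ℓ₀)
  have hsub : H.filter (fun w => recv1 ℓ₀ w = some (x ℓ₀)) ⊆ H.filter fun w => x w = x ℓ₀ :=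
    monotone_filter_right H fun _ hw hd => input_eq_of_recv1_eq_some h1 hw hd
  have := card_le_card hsub
  omega

theorem output_eq_king_input (hnt : 3 * t < n) (hH : #(univ \ H) ≤ t)
    (h1 : ∀ v : Fin n, ∀ w ∈ H, recv1 v w = if ℓ w = some v then some (x w) else none)
    (hh : ∀ w ∈ H, (h w = 1 ↔ (ℓ w = some w ∧ n - t ≤ recvCount (recv1 w) (x w))))
    (h4 : ∀ v : Fin n, ∀ w ∈ H, recv4 v w = if recv3 w v = some (x w) then some (x w) else none)
    {ℓ₀ : Fin n} (hℓ₀ : ℓ₀ ∈ H) (hking : h ℓ₀ = 1)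
    {y : Fin n → 𝒱} {v : Fin n} (hout : IsThresholdOutput t (recv4 v) (x v) (y v))
    (hforward : ∀ u, recv3 u v = if x ℓ₀ = x v then none else some (x ℓ₀)) : y v = x ℓ₀ := by
  refine hout.eq_of_forall_correct hH (fun w hw e he => ?_) ?_
  · have h3w := (input_eq_of_recv4_eq_some h4 hw he).2
    rw [hforward] at h3w
    split_ifs at h3w
    exact (Option.some_injective _ h3w).symm
  · refine or_iff_not_imp_left.mpr fun hxv => ?_
    refine (lt_card_filter_input_eq_of_grade_one hnt hH h1 hh hℓ₀ hking).trans_le ?_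
    refine card_le_recvCount fun w hw => ?_
    obtain ⟨hwH, hxw⟩ := mem_filter.mp hw
    rw [h4 v w hwH, hforward, if_neg (Ne.symm hxv), hxw, if_pos rfl]

end Protocol

end GradedKing

open GradedKing in
theorem graded_king_consensus_four_rounds
    {n t : ℕ} {𝒱 : Type*} [DecidableEq 𝒱]
    (hnt : 3 * t < n)
    (H : Finset (Fin n)) (hH : (Finset.univ \ H).card ≤ t)
    (x : Fin n → 𝒱) (ℓ : Fin n → Option (Fin n))
    (recv1 recv2 recv3 recv4 : Fin n → Fin n → Option 𝒱)
    (h : Fin n → Fin 2)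
    -- round 1: a correct node sends its input to its leader only
    (h1 : ∀ v : Fin n, ∀ w ∈ H, recv1 v w = if ℓ w = some v then some (x w) else none)
    -- a correct node sets h = 1 iff it is its own leader and received its input n − t times
    (hh : ∀ w ∈ H, (h w = 1 ↔ (ℓ w = some w ∧ n - t ≤ recvCount (recv1 w) (x w))))
    -- round 2: a correct node sends its input to all nodes iff h = 1
    (h2 : ∀ v : Fin n, ∀ w ∈ H, recv2 v w = if h w = 1 then some (x w) else none)
    -- round 3: a correct node forwards the value received from its leader in round 2
    -- to all nodes, provided it differs from its own input; otherwise it is silent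
    (h3 : ∀ u : Fin n, ∀ v ∈ H, recv3 u v =
      match ℓ v with
      | none => none
      | some ℓ' =>
        match recv2 v ℓ' with
        | none => none
        | some c => if c = x v then none else some c)
    -- round 4: a correct node sends its input exactly to those nodes from which
    -- it received its input in round 3
    (h4 : ∀ v : Fin n, ∀ w ∈ H, recv4 v w =
      if recv3 w v = some (x w) then some (x w) else none)
    (y : Fin n → 𝒱) (g : Fin n → Fin 2)
    -- output rule at correct nodes
    (hout : ∀ v ∈ H, g v = h v ∧
      ((∃ c : 𝒱, t + 1 ≤ recvCount (recv4 v) c) →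
        t + 1 ≤ recvCount (recv4 v) (y v)) ∧
      (¬ (∃ c : 𝒱, t + 1 ≤ recvCount (recv4 v) c) → y v = x v)) :
    -- Validity
    (∀ c : 𝒱, (∀ v ∈ H, x v = c) → ∀ v ∈ H, y v = c) ∧
    -- King Validity
    (∀ c : 𝒱, ∀ ℓ₀ ∈ H, (∀ v ∈ H, x v = c ∧ ℓ v = some ℓ₀) → g ℓ₀ = 1) ∧
    -- Graded King Agreement
    (∀ ℓ₀ ∈ H, (∀ v ∈ H, ℓ v = some ℓ₀) → g ℓ₀ = 1 → ∀ v ∈ H, y v = y ℓ₀) := by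
  have hthreshold : ∀ v ∈ H, IsThresholdOutput t (recv4 v) (x v) (y v) := fun v hv => (hout v hv).2
  refine ⟨fun c hall v hv => validity hH h4 hv (hthreshold v hv) hall,
    fun c ℓ₀ hℓ₀ hall => (hout ℓ₀ hℓ₀).1 ▸ king_validity hH h1 hh hℓ₀ hall,
    fun ℓ₀ hℓ₀ hall hg => ?_⟩
  have hking : h ℓ₀ = 1 := (hout ℓ₀ hℓ₀).1 ▸ hg
  have hagree : ∀ v ∈ H, y v = x ℓ₀ := fun v hv =>
    output_eq_king_input hnt hH h1 hh h4 hℓ₀ hking (hthreshold v hv) fun u => by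
      rw [h3 u v hv, hall v hv]
      simp only [h2 v ℓ₀ hℓ₀, if_pos hking]
  exact fun v hv => (hagree v hv).trans (hagree ℓ₀ hℓ₀).symm
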